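/- arXiv:2506.03974 — 2 statements merged into one kernel-verified Lean document; each statement's English description precedes it below -/
import Mathlib

section
/- The biconjugate of g satisfies g**(x) = τ|x| for |x| ≤ μ and g**(x) = h(x) + λ for |x| ≥ μ, where τ = sup{v ≥ 0 : h*(v) ≤ λ} and μ = sup{x ≥ 0 : x ∈ ∂h*(τ)} (set to +∞ if ∂h*(τ) = ∅). -/
noncomputable section

open Set
open scoped Classical

/-- Convex (Fenchel) conjugate of an extended-real-valued function on `ℝ`. -/
def conj (f : ℝ → EReal) (v : ℝ) : EReal := ⨆ x : ℝ, ((v * x : ℝ) : EReal) - f x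

/-- Convex subdifferential of an extended-real-valued function on `ℝ`. -/
def subdiff (f : ℝ → EReal) (x : ℝ) : Set ℝ :=
  {d : ℝ | ∀ y : ℝ, f x + ((d * (y - x) : ℝ) : EReal) ≤ f y}

/-- Convexity of an extended-real-valued function on `ℝ`. -/
def EConvexOn (f : ℝ → EReal) : Prop :=
  ∀ x y a b : ℝ, 0 ≤ a → 0 ≤ b → a + b = 1 →
    f (a * x + b * y) ≤ (a : EReal) * f x + (b : EReal) * f y

/-- The ℓ₀-penalized regularizer `g(x) = λ‖x‖₀ + h(x)`. -/
def gfun (lam : ℝ) (h : ℝ → EReal) (x : ℝ) : EReal :=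
  (if x = 0 then (0 : EReal) else (lam : EReal)) + h x

/-- The parameter `τ = sup {v ≥ 0 : h*(v) ≤ λ}` (as a real number). -/
def tau (lam : ℝ) (h : ℝ → EReal) : ℝ :=
  sSup {v : ℝ | 0 ≤ v ∧ conj h v ≤ (lam : EReal)}

/-- The parameter `μ = sup {x ≥ 0 : x ∈ ∂h*(τ)}` if `∂h*(τ) ≠ ∅`, else `+∞`. -/
def mu (lam : ℝ) (h : ℝ → EReal) : EReal :=
  if (subdiff (conj h) (tau lam h)).Nonempty then
    sSup ((fun x : ℝ => (x : EReal)) '' {x : ℝ | 0 ≤ x ∧ x ∈ subdiff (conj h) (tau lam h)})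
  else ⊤

/-- The parameter `β = sup {v ≥ 0 : v ∈ dom h*}`. -/
def beta (h : ℝ → EReal) : EReal :=
  sSup ((fun v : ℝ => (v : EReal)) '' {v : ℝ | 0 ≤ v ∧ conj h v ≠ ⊤})

/-- The parameter `κ = sup {v ≥ 0 : v ∈ ∂h(μ)}` if `μ < +∞`, else `+∞`. -/
def kappa (lam : ℝ) (h : ℝ → EReal) : EReal :=
  if mu lam h ≠ ⊤ then
    sSup ((fun v : ℝ => (v : EReal)) '' {v : ℝ | 0 ≤ v ∧ v ∈ subdiff h (mu lam h).toReal})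
  else ⊤

/-- The set of minimizers of `u ↦ ½(u − v)² + γ·ω(u)`, i.e. `prox_{γω}(v)`. -/
def proxSet (γ : ℝ) (ω : ℝ → EReal) (v : ℝ) : Set ℝ :=
  {u : ℝ | ∀ w : ℝ,
    ((2⁻¹ * (u - v) ^ 2 : ℝ) : EReal) + (γ : EReal) * ω u ≤
      ((2⁻¹ * (w - v) ^ 2 : ℝ) : EReal) + (γ : EReal) * ω w}

/-!
Conjugating `g` directly gives `g* = max 0 (h* - λ)`. The slope `τ` satisfies `h*(τ) ≤ λ`, so
`g*(τ) = 0` and `g** ≥ τ|x|`, while `g** ≤ g ≤ h + λ`. If `h*` is `+∞` beyond `τ`, so is `g*`,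
which gives `g** ≤ τ|x|` and `μ = +∞`. Otherwise convexity forces `h*(τ) = λ`, and the right
derivative `M` of `h*` at `τ` is the largest subgradient there, so `μ = M` and
`h* ≥ λ + M (· - τ)`. This minorant yields `g** ≤ τ|x|` for `|x| ≤ M`; for `|x| ≥ M` it yields
`g** ≥ h** + λ`, and `h** = h` by Fenchel–Moreau, proved by separating a point from the closed
convex epigraph of `h`.
-/

lemma coe_sub_le_conj (f : ℝ → EReal) (v x : ℝ) : ((v * x : ℝ) : EReal) - f x ≤ conj f v :=
  le_iSup (fun x => ((v * x : ℝ) : EReal) - f x) x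

lemma conj_conj_le (f : ℝ → EReal) (x : ℝ) : conj (conj f) x ≤ f x := by
  refine iSup_le fun v => ?_
  rcases eq_or_ne (f x) ⊤ with hx | hx
  · rw [hx]; exact le_top
  rcases eq_or_ne (conj f v) ⊤ with hv | hv
  · rw [hv, EReal.sub_top]; exact bot_le
  rw [EReal.sub_le_iff_le_add (.inr hx) (.inl hv), mul_comm, add_comm]
  exact (EReal.sub_le_iff_le_add (.inr hv) (.inl hx)).1 (coe_sub_le_conj f v x)

lemma Function.Even.apply_abs {β : Type*} {f : ℝ → β} (hf : f.Even) (x : ℝ) : f |x| = f x := by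
  rcases abs_choice x with hx | hx <;> rw [hx]
  exact hf x

lemma lowerSemicontinuous_conj (f : ℝ → EReal) : LowerSemicontinuous (conj f) := by
  refine lowerSemicontinuous_iSup fun x => Continuous.lowerSemicontinuous
    (show Continuous fun v : ℝ => ((v * x : ℝ) : EReal) - f x from ?_)
  induction f x with
  | bot => simp only [EReal.coe_sub_bot]; exact continuous_const
  | coe r => exact continuous_coe_real_ereal.comp (by fun_prop)
  | top => simp only [EReal.sub_top]; exact continuous_const

section Conjugate

variable {f : ℝ → EReal}

lemma conj_le_coe_iff {v b : ℝ} : conj f v ≤ b ↔ ∀ x, ((v * x - b : ℝ) : EReal) ≤ f x := by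
  refine iSup_le_iff.trans (forall_congr' fun x => ?_)
  rw [EReal.sub_le_iff_le_add (.inr (EReal.coe_ne_top b)) (.inr (EReal.coe_ne_bot b)),
    EReal.coe_sub, EReal.sub_le_iff_le_add (.inl (EReal.coe_ne_bot b)) (.inl (EReal.coe_ne_top b)),
    add_comm]

lemma conj_nonneg (hf : f 0 = 0) (v : ℝ) : 0 ≤ conj f v := by
  simpa [hf] using coe_sub_le_conj f v 0

lemma conj_ne_bot (hf : f 0 = 0) (v : ℝ) : conj f v ≠ ⊥ :=
  ne_bot_of_le_ne_bot EReal.zero_ne_bot (conj_nonneg hf v)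

lemma conj_zero_le (hf : ∀ x, 0 ≤ f x) : conj f 0 ≤ 0 := by
  rw [← EReal.coe_zero, conj_le_coe_iff]
  simpa using hf

lemma Function.Even.conj (hf : f.Even) : (conj f).Even := by
  intro v
  unfold _root_.conj
  rw [← (Equiv.neg ℝ).iSup_comp]
  simp [hf _]

lemma conj_convex_combination_le {x y X Y a b : ℝ} (hX : conj f x ≤ X) (hY : conj f y ≤ Y)
    (ha : 0 ≤ a) (hb : 0 ≤ b) (hab : a + b = 1) :
    conj f (a * x + b * y) ≤ ((a * X + b * Y : ℝ) : EReal) := by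
  rw [conj_le_coe_iff] at hX hY ⊢
  intro z
  refine le_trans ?_ (max_le (hX z) (hY z))
  rw [le_max_iff, EReal.coe_le_coe_iff, EReal.coe_le_coe_iff]
  obtain rfl : b = 1 - a := by linarith
  rcases le_total (x * z - X) (y * z - Y) with h | h
  · right; nlinarith [mul_le_mul_of_nonneg_left h ha]
  · left; nlinarith [mul_le_mul_of_nonneg_left h ha]

lemma convexOn_toReal_conj (hf : ∀ v, conj f v ≠ ⊥) :
    ConvexOn ℝ {v | conj f v ≠ ⊤} (fun v => (conj f v).toReal) := by
  have hle : ∀ {x y a b : ℝ}, conj f x ≠ ⊤ → conj f y ≠ ⊤ → 0 ≤ a → 0 ≤ b → a + b = 1 →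
      conj f (a * x + b * y) ≤ ((a * (conj f x).toReal + b * (conj f y).toReal : ℝ) : EReal) :=
    fun hx hy ha hb hab =>
      conj_convex_combination_le (EReal.le_coe_toReal hx) (EReal.le_coe_toReal hy) ha hb hab
  refine ⟨fun x hx y hy a b ha hb hab => ne_top_of_le_ne_top (EReal.coe_ne_top _)
    (hle hx hy ha hb hab), fun x hx y hy a b ha hb hab => ?_⟩
  simp only [smul_eq_mul]
  rw [← EReal.coe_le_coe_iff, EReal.coe_toReal (ne_top_of_le_ne_top (EReal.coe_ne_top _)
    (hle hx hy ha hb hab)) (hf _)]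
  exact hle hx hy ha hb hab

end Conjugate

section FenchelMoreau

variable {f : ℝ → EReal}

lemma EConvexOn.convex_epigraph (hf : EConvexOn f) : Convex ℝ {p : ℝ × ℝ | f p.1 ≤ p.2} := by
  intro p hp q hq a b ha hb hab
  simp only [mem_ofPred_eq, Prod.fst_add, Prod.snd_add, Prod.smul_fst, Prod.smul_snd,
    smul_eq_mul] at hp hq ⊢
  calc f (a * p.1 + b * q.1) ≤ (a : EReal) * f p.1 + (b : EReal) * f q.1 := hf _ _ _ _ ha hb hab
    _ ≤ (a : EReal) * p.2 + (b : EReal) * q.2 :=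
        add_le_add (mul_le_mul_of_nonneg_left hp (EReal.coe_nonneg.2 ha))
          (mul_le_mul_of_nonneg_left hq (EReal.coe_nonneg.2 hb))
    _ = ((a * p.2 + b * q.2 : ℝ) : EReal) := by norm_cast

lemma nonneg_of_epigraph_separated {p q u y₀ : ℝ} (hy₀ : f y₀ ≠ ⊤)
    (hsep : ∀ y t : ℝ, f y ≤ t → u < y * p + t * q) : 0 ≤ q := by
  by_contra! hq
  set T := (f y₀).toReal
  set s := (y₀ * p + T * q - u) / -q
  have hs : 0 ≤ s := div_nonneg (by linarith [hsep y₀ T (EReal.le_coe_toReal hy₀)]) (by linarith)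
  have hsq : s * q = u - y₀ * p - T * q := by
    simp only [s]; field_simp [hq.ne]; ring
  have := hsep y₀ (T + s) ((EReal.le_coe_toReal hy₀).trans (EReal.coe_le_coe_iff.2 (by linarith)))
  linarith [add_mul T s q]

/-- `(p, q)` and `u` describe a line strictly separating `(x, c)` from the epigraph of `f`;
a vertical line (`q = 0`) is tilted using `f ≥ 0`. -/
lemma exists_affine_le_of_separated (hf : ∀ y, 0 ≤ f y) {p q u x c : ℝ}
    (hsep : ∀ y t : ℝ, f y ≤ t → u < y * p + t * q) (hx : x * p + c * q < u) :
    ∃ a b : ℝ, (∀ y, ((a * y - b : ℝ) : EReal) ≤ f y) ∧ c < a * x - b := by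
  by_cases htop : ∀ y, f y = ⊤
  · exact ⟨0, -(c + 1), fun y => by simp [htop y], by linarith⟩
  push Not at htop
  obtain ⟨y₀, hy₀⟩ := htop
  have hval : ∀ y, f y ≠ ⊤ → f y = ((f y).toReal : EReal) :=
    fun y hy => (EReal.coe_toReal hy (ne_bot_of_le_ne_bot EReal.zero_ne_bot (hf y))).symm
  rcases (nonneg_of_epigraph_separated hy₀ hsep).lt_or_eq with hq | hq
  · refine ⟨-p / q, -u / q, fun y => ?_, ?_⟩
    · rcases eq_or_ne (f y) ⊤ with hy | hy
      · rw [hy]; exact le_top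
      rw [hval y hy, EReal.coe_le_coe_iff, show -p / q * y - -u / q = (u - y * p) / q by ring,
        div_le_iff₀ hq]
      linarith [hsep y _ (hval y hy).le]
    · rw [show -p / q * x - -u / q = (u - x * p) / q by ring, lt_div_iff₀ hq]
      linarith
  · subst hq
    simp only [mul_zero, add_zero] at hsep hx
    set K := (|c| + 1) / (u - x * p)
    have hK : K * (u - x * p) = |c| + 1 := div_mul_cancel₀ _ (by linarith)
    refine ⟨-K * p, -K * u, fun y => ?_, by nlinarith [le_abs_self c]⟩
    rcases eq_or_ne (f y) ⊤ with hy | hy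
    · rw [hy]; exact le_top
    have hKpos : 0 < K := div_pos (by positivity) (by linarith)
    refine le_trans (EReal.coe_le_coe_iff.2 ?_) (hf y)
    nlinarith [hsep y _ (hval y hy).le]

lemma EConvexOn.exists_affine_le_of_lt (hconv : EConvexOn f) (hlsc : LowerSemicontinuous f)
    (hf : ∀ y, 0 ≤ f y) {x c : ℝ} (hc : (c : EReal) < f x) :
    ∃ a b : ℝ, (∀ y, ((a * y - b : ℝ) : EReal) ≤ f y) ∧ c < a * x - b := by
  obtain ⟨l, u, hlx, hl⟩ := geometric_hahn_banach_point_closed hconv.convex_epigraph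
    (hlsc.isClosed_epigraph.preimage (continuous_id.prodMap continuous_coe_real_ereal))
    (show (x, c) ∉ {p : ℝ × ℝ | f p.1 ≤ p.2} from not_le.2 hc)
  have hcoord : ∀ y t : ℝ, l (y, t) = y * l (1, 0) + t * l (0, 1) := fun y t => by
    rw [show ((y, t) : ℝ × ℝ) = y • (1, 0) + t • (0, 1) by ext <;> simp, map_add, map_smul,
      map_smul, smul_eq_mul, smul_eq_mul]
  exact exists_affine_le_of_separated hf (fun y t hyt => hcoord y t ▸ hl (y, t) hyt)
    (hcoord x c ▸ hlx)

lemma EConvexOn.conj_conj_eq (hconv : EConvexOn f) (hlsc : LowerSemicontinuous f)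
    (hf : ∀ y, 0 ≤ f y) (x : ℝ) : conj (conj f) x = f x := by
  refine le_antisymm (conj_conj_le f x) (EReal.ge_of_forall_gt_iff_ge.1 fun c hc => ?_)
  obtain ⟨a, b, hab, hcx⟩ := hconv.exists_affine_le_of_lt hlsc hf hc
  calc (c : EReal) ≤ ((x * a - b : ℝ) : EReal) := EReal.coe_le_coe_iff.2 (by linarith)
    _ ≤ ((x * a : ℝ) : EReal) - conj f a := by
        rw [EReal.coe_sub]; exact EReal.sub_le_sub le_rfl (conj_le_coe_iff.2 hab)
    _ ≤ conj (conj f) x := coe_sub_le_conj _ x a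

end FenchelMoreau

lemma ConvexOn.isGreatest_sInf_slope {D : Set ℝ} {φ : ℝ → ℝ} (hφ : ConvexOn ℝ D φ) {t : ℝ}
    (ht : t ∈ D) (hne : ∃ w ∈ D, t < w) (hbdd : BddBelow (slope φ t '' {z ∈ D | t < z})) :
    IsGreatest {d | ∀ y ∈ D, φ t + d * (y - t) ≤ φ y} (sInf (slope φ t '' {z ∈ D | t < z})) := by
  obtain ⟨w, hwD, htw⟩ := hne
  have hne : (slope φ t '' {z ∈ D | t < z}).Nonempty := ⟨_, w, ⟨hwD, htw⟩, rfl⟩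
  refine ⟨fun y hy => ?_, fun d hd => le_csInf hne ?_⟩
  · rcases lt_trichotomy y t with hyt | rfl | hty
    · have hle : slope φ t y ≤ sInf (slope φ t '' {z ∈ D | t < z}) := by
        refine le_csInf hne ?_
        rintro _ ⟨z, ⟨hzD, htz⟩, rfl⟩
        exact hφ.slope_mono ht ⟨hy, hyt.ne⟩ ⟨hzD, htz.ne'⟩ (hyt.trans htz).le
      rw [slope_def_field, div_le_iff_of_neg (sub_neg.2 hyt)] at hle
      linarith
    · simp
    · have hle : sInf (slope φ t '' {z ∈ D | t < z}) ≤ slope φ t y :=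
        csInf_le hbdd ⟨y, ⟨hy, hty⟩, rfl⟩
      rw [slope_def_field, le_div_iff₀ (sub_pos.2 hty)] at hle
      linarith
  · rintro _ ⟨z, ⟨hzD, htz⟩, rfl⟩
    rw [slope_def_field, le_div_iff₀ (sub_pos.2 htz)]
    linarith [hd z hzD]

lemma mem_subdiff_iff_of_eq_coe {f : ℝ → EReal} {t c d : ℝ} (hc : f t = c) :
    d ∈ subdiff f t ↔ ∀ y, ((c + d * (y - t) : ℝ) : EReal) ≤ f y := by
  simp only [subdiff, mem_ofPred_eq, hc, EReal.coe_add]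

section Tau

variable {lam : ℝ} {h : ℝ → EReal}

lemma bddAbove_tau_set (hdom : ∃ x : ℝ, 0 < x ∧ h x ≠ ⊤) :
    BddAbove {v : ℝ | 0 ≤ v ∧ conj h v ≤ (lam : EReal)} := by
  obtain ⟨x₀, hx₀, hfin⟩ := hdom
  refine ⟨(lam + (h x₀).toReal) / x₀, fun v hv => ?_⟩
  have := (conj_le_coe_iff.1 hv.2 x₀).trans (EReal.le_coe_toReal hfin)
  rw [EReal.coe_le_coe_iff] at this
  rw [le_div_iff₀ hx₀]
  linarith

variable (hlam : 0 ≤ lam) (hge : ∀ x : ℝ, 0 ≤ h x) (hdom : ∃ x : ℝ, 0 < x ∧ h x ≠ ⊤)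
include hlam hge hdom

lemma tau_mem : 0 ≤ tau lam h ∧ conj h (tau lam h) ≤ (lam : EReal) :=
  IsClosed.csSup_mem (isClosed_Ici.inter ((lowerSemicontinuous_conj h).isClosed_preimage _))
    ⟨0, self_mem_Ici, (conj_zero_le hge).trans (EReal.coe_nonneg.2 hlam)⟩ (bddAbove_tau_set hdom)

lemma le_tau_of_conj_le {v : ℝ} (hv : conj h v ≤ (lam : EReal)) : v ≤ tau lam h := by
  rcases le_or_gt 0 v with hv0 | hv0
  · exact le_csSup (bddAbove_tau_set hdom) ⟨hv0, hv⟩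
  · exact hv0.le.trans (tau_mem hlam hge hdom).1

lemma lt_conj_of_tau_lt {v : ℝ} (hv : tau lam h < v) : (lam : EReal) < conj h v :=
  lt_of_not_ge fun hle => hv.not_ge (le_tau_of_conj_le hlam hge hdom hle)

/-- Convexity of `h*` rules out a jump at `τ`. -/
lemma conj_tau_eq (h0 : h 0 = 0) (hw : ∃ w, tau lam h < w ∧ conj h w ≠ ⊤) :
    conj h (tau lam h) = lam := by
  obtain ⟨w, hτw, hw⟩ := hw
  obtain ⟨-, hτle⟩ := tau_mem hlam hge hdom
  set τ := tau lam h
  refine le_antisymm hτle (not_lt.1 fun hlt => ?_)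
  set T := (conj h τ).toReal
  set W := (conj h w).toReal
  have hT : conj h τ = T := (EReal.coe_toReal (ne_top_of_le_ne_top (EReal.coe_ne_top _) hτle)
    (conj_ne_bot h0 τ)).symm
  have hW : conj h w = W := (EReal.coe_toReal hw (conj_ne_bot h0 w)).symm
  have hTlam : T < lam := by rwa [hT, EReal.coe_lt_coe_iff] at hlt
  have hlamW : lam < W := by
    have := lt_conj_of_tau_lt hlam hge hdom hτw
    rwa [hW, EReal.coe_lt_coe_iff] at this
  set θ := (lam - T) / (W - T)
  have hθ : 0 < θ := div_pos (by linarith) (by linarith)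
  have hθ1 : θ ≤ 1 := (div_le_one (by linarith)).2 (by linarith)
  have hcomb := conj_convex_combination_le hT.le hW.le (sub_nonneg.2 hθ1) hθ.le (sub_add_cancel 1 θ)
  have hθWT : θ * (W - T) = lam - T := div_mul_cancel₀ _ (by linarith)
  rw [show (1 - θ) * T + θ * W = lam by linear_combination hθWT] at hcomb
  exact hcomb.not_gt (lt_conj_of_tau_lt hlam hge hdom (by nlinarith))

end Tau

section Mu

variable {lam : ℝ} {h : ℝ → EReal}

lemma mu_eq_top (hτ : ∀ w, tau lam h < w → conj h w = ⊤) : mu lam h = ⊤ := by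
  rw [mu]
  split_ifs with hne
  · obtain ⟨d, hd⟩ := hne
    refine (EReal.eq_top_iff_forall_lt _).2 fun r => ?_
    have hmem : max d (|r| + 1) ∈ {x : ℝ | 0 ≤ x ∧ x ∈ subdiff (conj h) (tau lam h)} := by
      refine ⟨le_max_of_le_right (by positivity), fun y => ?_⟩
      rcases le_or_gt y (tau lam h) with hy | hy
      · refine le_trans (add_le_add_right (EReal.coe_le_coe_iff.2 ?_) _) (hd y)
        exact mul_le_mul_of_nonpos_right (le_max_left _ _) (sub_nonpos.2 hy)
      · rw [hτ y hy]; exact le_top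
    refine lt_of_lt_of_le (EReal.coe_lt_coe_iff.2 ?_) (le_sSup ⟨_, hmem, rfl⟩)
    exact (lt_of_le_of_lt (le_abs_self r) (lt_add_one _)).trans_le (le_max_right _ _)
  · rfl

lemma exists_mu_eq_coe (hlam : 0 ≤ lam) (h0 : h 0 = 0) (hge : ∀ x : ℝ, 0 ≤ h x)
    (hdom : ∃ x : ℝ, 0 < x ∧ h x ≠ ⊤) (hw : ∃ w, tau lam h < w ∧ conj h w ≠ ⊤) :
    ∃ M : ℝ, mu lam h = M ∧ ∀ v, ((lam + M * (v - tau lam h) : ℝ) : EReal) ≤ conj h v := by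
  have hτ := conj_tau_eq hlam hge hdom h0 hw
  obtain ⟨w, hτw, hwD⟩ := hw
  set τ := tau lam h
  set D := {v | conj h v ≠ ⊤}
  set φ := fun v => (conj h v).toReal
  have hφ : ∀ v ∈ D, conj h v = φ v := fun v hv => (EReal.coe_toReal hv (conj_ne_bot h0 v)).symm
  have hφτ : φ τ = lam := by simp [φ, hτ]
  have hsubdiff : subdiff (conj h) τ = {d | ∀ y ∈ D, φ τ + d * (y - τ) ≤ φ y} := by
    ext d
    rw [mem_subdiff_iff_of_eq_coe hτ, hφτ]
    refine ⟨fun hd y hy => ?_, fun hd y => ?_⟩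
    · have := hd y
      rwa [hφ y hy, EReal.coe_le_coe_iff] at this
    · by_cases hy : y ∈ D
      · rw [hφ y hy]; exact_mod_cast hd y hy
      · rw [show conj h y = ⊤ by simpa [D] using hy]; exact le_top
  have hslope : ∀ z ∈ {z ∈ D | τ < z}, 0 ≤ slope φ τ z := fun z ⟨hzD, hτz⟩ => by
    have := lt_conj_of_tau_lt hlam hge hdom hτz
    rw [hφ z hzD, EReal.coe_lt_coe_iff, ← hφτ] at this
    rw [slope_def_field]
    exact div_nonneg (by linarith) (by linarith)
  have hG := (convexOn_toReal_conj (conj_ne_bot h0)).isGreatest_sInf_slope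
    (show τ ∈ D by simp [D, hτ]) ⟨w, hwD, hτw⟩ ⟨0, by rintro _ ⟨z, hz, rfl⟩; exact hslope z hz⟩
  set M := sInf (slope φ τ '' {z ∈ D | τ < z})
  have hM0 : 0 ≤ M :=
    le_csInf ⟨_, w, ⟨hwD, hτw⟩, rfl⟩ (by rintro _ ⟨z, hz, rfl⟩; exact hslope z hz)
  rw [← hsubdiff] at hG
  refine ⟨M, ?_, (mem_subdiff_iff_of_eq_coe hτ).1 hG.1⟩
  rw [mu, if_pos ⟨M, hG.1⟩]
  have hN : IsGreatest {x : ℝ | 0 ≤ x ∧ x ∈ subdiff (conj h) τ} M :=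
    ⟨⟨hM0, hG.1⟩, fun d hd => hG.2 hd.2⟩
  exact (EReal.coe_strictMono.monotone.map_isGreatest hN).csSup_eq

end Mu

section Gfun

variable {lam : ℝ} {h : ℝ → EReal}

lemma gfun_le (hlam : 0 ≤ lam) (x : ℝ) : gfun lam h x ≤ h x + lam := by
  rw [gfun, add_comm]
  split_ifs
  · exact add_le_add le_rfl (EReal.coe_nonneg.2 hlam)
  · exact le_rfl

lemma gfun_even (hh : h.Even) : (gfun lam h).Even := fun x => by simp [gfun, hh x]

lemma conj_gfun (hlam : 0 ≤ lam) (h0 : h 0 = 0) (v : ℝ) :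
    conj (gfun lam h) v = max 0 (conj h v - lam) := by
  have hzero : ((v * 0 : ℝ) : EReal) - gfun lam h 0 = 0 := by simp [gfun, h0]
  have hne : ∀ x ≠ 0, ((v * x : ℝ) : EReal) - gfun lam h x = ((v * x : ℝ) : EReal) - h x - lam := by
    intro x hx
    rw [gfun, if_neg hx]
    induction h x with
    | bot => rw [EReal.add_bot, EReal.coe_sub_bot, EReal.top_sub_coe]
    | coe F => norm_cast; ring
    | top => simp
  refine le_antisymm (iSup_le fun x => ?_) (max_le (hzero ▸ coe_sub_le_conj _ v 0) ?_)
  · rcases eq_or_ne x 0 with rfl | hx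
    · rw [hzero]; exact le_max_left _ _
    · rw [hne x hx]
      exact (EReal.sub_le_sub (coe_sub_le_conj h v x) le_rfl).trans (le_max_right _ _)
  · refine EReal.sub_le_of_le_add (iSup_le fun x => ?_)
    rcases eq_or_ne x 0 with rfl | hx
    · simpa [h0] using add_nonneg (hzero ▸ coe_sub_le_conj (gfun lam h) v 0)
        (EReal.coe_nonneg.2 hlam)
    · rw [← EReal.sub_add_cancel (a := ((v * x : ℝ) : EReal) - h x) (b := lam), ← hne x hx]
      exact add_le_add (coe_sub_le_conj _ v x) le_rfl

lemma biconj_gfun_le (hlam : 0 ≤ lam) (x : ℝ) : conj (conj (gfun lam h)) x ≤ h x + lam :=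
  (conj_conj_le _ x).trans (gfun_le hlam x)

lemma tau_mul_le_biconj_gfun (hlam : 0 ≤ lam) (h0 : h 0 = 0) (hge : ∀ x : ℝ, 0 ≤ h x)
    (hdom : ∃ x : ℝ, 0 < x ∧ h x ≠ ⊤) (x : ℝ) :
    ((tau lam h * x : ℝ) : EReal) ≤ conj (conj (gfun lam h)) x := by
  have hτ : conj (gfun lam h) (tau lam h) = 0 := by
    rw [conj_gfun hlam h0, max_eq_left (EReal.sub_le_of_le_add _)]
    rw [zero_add]; exact (tau_mem hlam hge hdom).2
  simpa [hτ, mul_comm] using coe_sub_le_conj (conj (gfun lam h)) x (tau lam h)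

lemma biconj_gfun_le_tau_mul (hlam : 0 ≤ lam) (h0 : h 0 = 0) {x : ℝ} (hx : 0 ≤ x)
    (hτx : ∀ v, tau lam h < v → ((lam + x * (v - tau lam h) : ℝ) : EReal) ≤ conj h v) :
    conj (conj (gfun lam h)) x ≤ ((tau lam h * x : ℝ) : EReal) := by
  refine conj_le_coe_iff.2 fun v => ?_
  rw [conj_gfun hlam h0]
  rcases le_or_gt v (tau lam h) with hv | hv
  · refine le_trans (EReal.coe_le_coe_iff.2 ?_) (le_max_left _ _)
    nlinarith [mul_le_mul_of_nonneg_left hv hx]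
  · refine le_trans ?_ (le_max_right _ _)
    calc ((x * v - tau lam h * x : ℝ) : EReal)
        = ((lam + x * (v - tau lam h) : ℝ) : EReal) - lam := by rw [← EReal.coe_sub]; ring_nf
      _ ≤ conj h v - lam := EReal.sub_le_sub (hτx v hv) le_rfl

lemma add_le_biconj_gfun (hlam : 0 ≤ lam) (h0 : h 0 = 0) (hge : ∀ x : ℝ, 0 ≤ h x)
    (hdom : ∃ x : ℝ, 0 < x ∧ h x ≠ ⊤) (hconv : EConvexOn h) (hlsc : LowerSemicontinuous h)
    {M x : ℝ} (hM : ∀ v, ((lam + M * (v - tau lam h) : ℝ) : EReal) ≤ conj h v) (hx : M ≤ x) :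
    h x + lam ≤ conj (conj (gfun lam h)) x := by
  rw [← EReal.le_sub_iff_add_le (.inl (EReal.coe_ne_bot lam)) (.inl (EReal.coe_ne_top lam)),
    ← hconv.conj_conj_eq hlsc hge x]
  refine iSup_le fun v => ?_
  rcases le_or_gt (conj h v) lam with hv | hv
  · have hvτ := le_tau_of_conj_le hlam hge hdom hv
    calc ((x * v : ℝ) : EReal) - conj h v
        ≤ ((x * v : ℝ) : EReal) - ((lam + M * (v - tau lam h) : ℝ) : EReal) :=
          EReal.sub_le_sub le_rfl (hM v)
      _ ≤ ((tau lam h * x : ℝ) : EReal) - lam := by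
          rw [← EReal.coe_sub, ← EReal.coe_sub, EReal.coe_le_coe_iff]
          nlinarith [mul_nonpos_of_nonneg_of_nonpos (sub_nonneg.2 hx) (sub_nonpos.2 hvτ)]
      _ ≤ conj (conj (gfun lam h)) x - lam :=
          EReal.sub_le_sub (tau_mul_le_biconj_gfun hlam h0 hge hdom x) le_rfl
  · have hsplit : ((x * v : ℝ) : EReal) - conj h v
        = ((x * v : ℝ) : EReal) - conj (gfun lam h) v - lam := by
      rw [conj_gfun hlam h0, max_eq_right ((EReal.le_sub_iff_add_le (.inl (EReal.coe_ne_bot _))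
        (.inl (EReal.coe_ne_top _))).2 (by rw [zero_add]; exact hv.le))]
      induction conj h v with
      | bot => rw [EReal.bot_sub, EReal.coe_sub_bot, EReal.top_sub_coe]
      | coe F => norm_cast; ring
      | top => simp
    rw [hsplit]
    exact EReal.sub_le_sub (coe_sub_le_conj _ x v) le_rfl

end Gfun

theorem biconj_gfun_eq (lam : ℝ) (h : ℝ → EReal) (hlam : 0 < lam)
    (h0 : h 0 = 0) (hge : ∀ x : ℝ, 0 ≤ h x)
    (hlsc : LowerSemicontinuous h) (hconv : EConvexOn h)
    (hdom : ∃ x : ℝ, 0 < x ∧ h x ≠ ⊤) (heven : ∀ x : ℝ, h (-x) = h x) :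
    ∀ x : ℝ,
      (((|x| : ℝ) : EReal) ≤ mu lam h →
        conj (conj (gfun lam h)) x = ((tau lam h * |x| : ℝ) : EReal)) ∧
      (mu lam h ≤ ((|x| : ℝ) : EReal) →
        conj (conj (gfun lam h)) x = h x + (lam : EReal)) := by
  intro x
  have hg : (conj (conj (gfun lam h))).Even := (gfun_even heven).conj.conj
  rw [← hg.apply_abs, ← Function.Even.apply_abs heven]
  have hx := abs_nonneg x
  have hlower := tau_mul_le_biconj_gfun hlam.le h0 hge hdom |x|
  by_cases hw : ∃ w, tau lam h < w ∧ conj h w ≠ ⊤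
  · obtain ⟨M, hmu, hM⟩ := exists_mu_eq_coe hlam.le h0 hge hdom hw
    rw [hmu, EReal.coe_le_coe_iff, EReal.coe_le_coe_iff]
    refine ⟨fun hxM => le_antisymm (biconj_gfun_le_tau_mul hlam.le h0 hx fun v hv => ?_) hlower,
      fun hMx => le_antisymm (biconj_gfun_le hlam.le _)
        (add_le_biconj_gfun hlam.le h0 hge hdom hconv hlsc hM hMx)⟩
    refine le_trans (EReal.coe_le_coe_iff.2 ?_) (hM v)
    nlinarith
  · push Not at hw
    rw [mu_eq_top hw]
    refine ⟨fun _ => le_antisymm (biconj_gfun_le_tau_mul hlam.le h0 hx fun v hv => ?_) hlower,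
      fun htop => absurd (top_le_iff.1 htop) (EReal.coe_ne_top _)⟩
    rw [hw v hv]
    exact le_top
end
end

section
/- The parameter μ is strictly positive: μ > 0 (possibly +∞). -/
noncomputable section

open Set
open scoped Classical

/-!
If `∂h*(τ)` is empty then `μ = +∞`; otherwise fix `d ∈ ∂h*(τ)`. If `h* = +∞` right of `τ`, every
slope `m ≥ d` is a subgradient at `τ`, so positive ones exist. Otherwise `h*` is finite at some
`y > τ`; convexity of `h*` and maximality of `τ` force `h*(τ) ≥ λ`, and the subgradient inequality
at `0`, where `h*(0) = 0`, gives `d τ ≥ h*(τ) ≥ λ > 0`, hence `d > 0`.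
-/

section Conjugate

variable {h : ℝ → EReal}

lemma sub_le_conj (h : ℝ → EReal) (v x : ℝ) : ((v * x : ℝ) : EReal) - h x ≤ conj h v :=
  le_iSup (fun x : ℝ => ((v * x : ℝ) : EReal) - h x) x

lemma conj_nonneg_s10 (h0 : h 0 = 0) (v : ℝ) : 0 ≤ conj h v := by
  simpa [h0] using sub_le_conj h v 0

lemma conj_zero (h0 : h 0 = 0) (hge : ∀ x, 0 ≤ h x) : conj h 0 = 0 := by
  refine le_antisymm (iSup_le fun x => ?_) (conj_nonneg_s10 h0 0)
  simpa [sub_eq_add_neg] using hge x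

lemma conj_convex_combination_le_s10 {a b A B t : ℝ} (ha : conj h a ≤ A) (hb : conj h b ≤ B)
    (ht₀ : 0 ≤ t) (ht₁ : t ≤ 1) :
    conj h ((1 - t) * a + t * b) ≤ (((1 - t) * A + t * B : ℝ) : EReal) := by
  refine iSup_le fun x => ?_
  induction hx : h x using EReal.rec with
  | bot =>
    have := (sub_le_conj h a x).trans ha
    rw [hx, EReal.coe_sub_bot] at this
    exact absurd this (EReal.coe_lt_top A).not_ge
  | top => simp
  | coe r =>
    have hA : a * x - r ≤ A := by
      have := (sub_le_conj h a x).trans ha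
      rwa [hx, ← EReal.coe_sub, EReal.coe_le_coe_iff] at this
    have hB : b * x - r ≤ B := by
      have := (sub_le_conj h b x).trans hb
      rwa [hx, ← EReal.coe_sub, EReal.coe_le_coe_iff] at this
    rw [← EReal.coe_sub, EReal.coe_le_coe_iff]
    calc ((1 - t) * a + t * b) * x - r = (1 - t) * (a * x - r) + t * (b * x - r) := by ring
      _ ≤ (1 - t) * A + t * B := by gcongr

-- `h*` is convex, so just right of `a` it stays below the chord to `b`, which starts below `c`.
lemma exists_gt_conj_le {a b c : ℝ} (hab : a < b) (ha : conj h a < c) (hb : conj h b ≠ ⊤) :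
    ∃ v, a < v ∧ conj h v ≤ c := by
  obtain ⟨A, hA, hAc⟩ := EReal.lt_iff_exists_real_btwn.1 ha
  set B := (conj h b).toReal
  have hchord : ContinuousAt (fun t : ℝ => (1 - t) * A + t * B) 0 := by fun_prop
  have hnear : ∀ᶠ t in nhdsWithin 0 (Ioi 0), (1 - t) * A + t * B < c ∧ t ∈ Ioo 0 1 :=
    ((hchord.eventually_lt continuousAt_const (by simpa using hAc)).filter_mono
      nhdsWithin_le_nhds).and (Ioo_mem_nhdsGT one_pos)
  obtain ⟨t, hlt, ht₀, ht₁⟩ := hnear.exists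
  refine ⟨(1 - t) * a + t * b, by nlinarith, ?_⟩
  exact (conj_convex_combination_le_s10 hA.le (EReal.le_coe_toReal hb) ht₀.le ht₁.le).trans
    (EReal.coe_le_coe_iff.2 hlt.le)

lemma bddAbove_setOf_conj_le {x₀ : ℝ} (hx₀ : 0 < x₀) (hfin : h x₀ ≠ ⊤) (c : ℝ) :
    BddAbove {v | conj h v ≤ c} := by
  induction hx : h x₀ using EReal.rec with
  | bot =>
    refine ⟨0, fun v hv => ?_⟩
    have := (sub_le_conj h v x₀).trans hv
    rw [hx, EReal.coe_sub_bot] at this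
    exact absurd this (EReal.coe_lt_top c).not_ge
  | top => exact absurd hx hfin
  | coe r =>
    refine ⟨(c + r) / x₀, fun v hv => ?_⟩
    have := (sub_le_conj h v x₀).trans hv
    rw [hx, ← EReal.coe_sub, EReal.coe_le_coe_iff] at this
    rw [le_div_iff₀ hx₀]
    linarith

end Conjugate

section Subdifferential

variable {f : ℝ → EReal} {x d : ℝ}

lemma le_coe_mul_of_mem_subdiff (hd : d ∈ subdiff f x) (hf0 : f 0 = 0) :
    f x ≤ ((d * x : ℝ) : EReal) := by
  have := hd 0
  rw [hf0] at this
  induction hx : f x using EReal.rec with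
  | bot => exact bot_le
  | top =>
    rw [hx, EReal.top_add_coe] at this
    exact absurd this EReal.zero_lt_top.not_ge
  | coe r =>
    rw [hx, ← EReal.coe_add, ← EReal.coe_zero, EReal.coe_le_coe_iff] at this
    exact EReal.coe_le_coe_iff.2 (by linarith)

lemma mem_subdiff_of_le_of_eq_top {m : ℝ} (hd : d ∈ subdiff f x) (hdm : d ≤ m)
    (htop : ∀ y, x < y → f y = ⊤) : m ∈ subdiff f x := by
  intro y
  rcases lt_or_ge x y with hxy | hyx
  · simp [htop y hxy]
  · refine le_trans (add_le_add le_rfl ?_) (hd y)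
    exact EReal.coe_le_coe_iff.2 (mul_le_mul_of_nonpos_right hdm (by linarith))

end Subdifferential

section Tau

variable {lam : ℝ} {h : ℝ → EReal}

lemma le_tau (hbdd : BddAbove {v | 0 ≤ v ∧ conj h v ≤ lam}) {v : ℝ} (hv₀ : 0 ≤ v)
    (hv : conj h v ≤ lam) : v ≤ tau lam h :=
  le_csSup hbdd ⟨hv₀, hv⟩

lemma lam_le_conj_tau (hbdd : BddAbove {v | 0 ≤ v ∧ conj h v ≤ lam}) (hτ : 0 ≤ tau lam h)
    {y : ℝ} (hy : tau lam h < y) (hy_fin : conj h y ≠ ⊤) : (lam : EReal) ≤ conj h (tau lam h) := by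
  by_contra! hlt
  obtain ⟨v, hτv, hv⟩ := exists_gt_conj_le hy hlt hy_fin
  exact (le_tau hbdd (hτ.trans hτv.le) hv).not_gt hτv

end Tau

theorem mu_pos_general (lam : ℝ) (h : ℝ → EReal) (hlam : 0 < lam)
    (h0 : h 0 = 0) (hge : ∀ x : ℝ, 0 ≤ h x)
    (hdom : ∃ x : ℝ, 0 < x ∧ h x ≠ ⊤) :
    (0 : EReal) < mu lam h := by
  obtain ⟨x₀, hx₀, hx₀_fin⟩ := hdom
  have hbdd : BddAbove {v | 0 ≤ v ∧ conj h v ≤ lam} :=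
    (bddAbove_setOf_conj_le hx₀ hx₀_fin lam).mono fun v hv => hv.2
  have hτ : 0 ≤ tau lam h :=
    le_tau hbdd le_rfl (by rw [conj_zero h0 hge]; exact_mod_cast hlam.le)
  unfold mu
  split_ifs with hne
  swap
  · exact EReal.zero_lt_top
  obtain ⟨d, hd⟩ := hne
  suffices ∃ m, 0 < m ∧ m ∈ subdiff (conj h) (tau lam h) by
    obtain ⟨m, hm, hm_mem⟩ := this
    exact (EReal.coe_lt_coe_iff.2 hm).trans_le (le_sSup ⟨m, ⟨hm.le, hm_mem⟩, rfl⟩)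
  by_cases htop : ∀ y, tau lam h < y → conj h y = ⊤
  · exact ⟨max d 0 + 1, by positivity,
      mem_subdiff_of_le_of_eq_top hd (by linarith [le_max_left d 0]) htop⟩
  push Not at htop
  obtain ⟨y, hy, hy_fin⟩ := htop
  have hlam_le : (lam : EReal) ≤ ((d * tau lam h : ℝ) : EReal) :=
    (lam_le_conj_tau hbdd hτ hy hy_fin).trans (le_coe_mul_of_mem_subdiff hd (conj_zero h0 hge))
  refine ⟨d, pos_of_mul_pos_left ?_ hτ, hd⟩
  exact hlam.trans_le (EReal.coe_le_coe_iff.1 hlam_le)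

theorem mu_pos (lam : ℝ) (h : ℝ → EReal) (hlam : 0 < lam)
    (h0 : h 0 = 0) (hge : ∀ x : ℝ, 0 ≤ h x)
    (hlsc : LowerSemicontinuous h) (hconv : EConvexOn h)
    (hdom : ∃ x : ℝ, 0 < x ∧ h x ≠ ⊤) :
    (0 : EReal) < mu lam h :=
  mu_pos_general lam h hlam h0 hge hdom
end
end
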